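/- Let λ be a partition with Frobenius coordinates (a_1,…,a_r | b_1,…,b_r). Then for every real t > 0, the series Σ_{i=1}^∞ e^{t(λ_i − i + 1/2)} converges and Σ_{i=1}^∞ e^{t(λ_i − i + 1/2)} = Σ_{j=1}^{r} ( e^{t(a_j + 1/2)} − e^{−t(b_j + 1/2)} ) + 1/(2·sinh(t/2)). -/

import Mathlib

/-!
Subtracting the series of the empty partition, `∑ e^{-t(i+1/2)} = 1 / (2 sinh (t/2))`, leaves a
finite sum. Removing the principal hook of `λ` (its first row and column) turns
`(a_1,…,a_r | b_1,…,b_r)` into `(a_2,…,a_r | b_2,…,b_r)` and changes that finite sum by exactly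
`e^{t(a_1+1/2)} - e^{-t(b_1+1/2)}`, so the identity follows by induction on the number of rows.
-/

/-- The Frobenius rank of a partition `μ` (0-indexed): the number of indices `i`
with `i < μ i`. -/
noncomputable def frobeniusRank (μ : ℕ → ℕ) : ℕ := Nat.card {i : ℕ | i < μ i}

/-- The `j`-th part (0-indexed) of the conjugate partition of `μ`:
`μ' j = #{i : μ i > j}`. -/
noncomputable def conjugatePart (μ : ℕ → ℕ) (j : ℕ) : ℕ := Nat.card {i : ℕ | j < μ i}

lemma lt_natCard_setOf_iff {P : ℕ → Prop} (hP : Antitone P) {N : ℕ} (hN : ¬ P N) (i : ℕ) :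
    i < Nat.card {i | P i} ↔ P i := by
  classical
  have hex : ∃ n, ¬ P n := ⟨N, hN⟩
  have hP_iff : ∀ i, P i ↔ i < Nat.find hex := fun i =>
    ⟨fun hi => lt_of_not_ge fun hle => Nat.find_spec hex (hP hle hi),
     fun hi => not_not.mp (Nat.find_min hex hi)⟩
  have hset : {i | P i} = Set.Iio (Nat.find hex) := Set.ext hP_iff
  rw [hset, Nat.card_eq_card_toFinset, Set.toFinset_Iio, Nat.card_Iio, hP_iff]

section Partition

variable {μ : ℕ → ℕ} {N : ℕ}

lemma lt_frobeniusRank_iff (hμ : Antitone μ) (hN : μ N = 0) (i : ℕ) :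
    i < frobeniusRank μ ↔ i < μ i :=
  lt_natCard_setOf_iff (fun _ _ hij hj => (hij.trans_lt hj).trans_le (hμ hij)) (N := N)
    (by simp [hN]) i

lemma lt_conjugatePart_iff (hμ : Antitone μ) (hN : μ N = 0) (j i : ℕ) :
    i < conjugatePart μ j ↔ j < μ i :=
  lt_natCard_setOf_iff (fun _ _ hij hj => hj.trans_le (hμ hij)) (N := N) (by simp [hN]) i

lemma Antitone.eq_zero_of_le (hμ : Antitone μ) (hN : μ N = 0) {i : ℕ} (hi : N ≤ i) : μ i = 0 :=
  Nat.eq_zero_of_le_zero (hN ▸ hμ hi)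

lemma frobeniusRank_eq_zero (hμ : Antitone μ) (h0 : μ 0 = 0) : frobeniusRank μ = 0 := by
  simpa [h0] using lt_frobeniusRank_iff hμ h0 0

def removePrincipalHook (μ : ℕ → ℕ) (i : ℕ) : ℕ := μ (i + 1) - 1

lemma antitone_removePrincipalHook (hμ : Antitone μ) : Antitone (removePrincipalHook μ) :=
  fun _ _ hij => Nat.sub_le_sub_right (hμ (Nat.succ_le_succ hij)) 1

lemma removePrincipalHook_apply_eq_zero (hN : μ (N + 1) = 0) : removePrincipalHook μ N = 0 := by
  simp [removePrincipalHook, hN]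

lemma frobeniusRank_removePrincipalHook (hμ : Antitone μ) (hN : μ N = 0) (h0 : 0 < μ 0) :
    frobeniusRank μ = frobeniusRank (removePrincipalHook μ) + 1 := by
  have hν := antitone_removePrincipalHook hμ
  have hνN := removePrincipalHook_apply_eq_zero (hμ.eq_zero_of_le hN N.le_succ)
  refine eq_of_forall_lt_iff fun i => ?_
  rw [lt_frobeniusRank_iff hμ hN]
  rcases i with _ | i
  · simpa using h0
  · rw [Nat.add_lt_add_iff_right, lt_frobeniusRank_iff hν hνN, removePrincipalHook]
    omega

lemma conjugatePart_succ (hμ : Antitone μ) (hN : μ N = 0) {j : ℕ} (hj : j + 1 < μ 0) :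
    conjugatePart μ (j + 1) = conjugatePart (removePrincipalHook μ) j + 1 := by
  have hν := antitone_removePrincipalHook hμ
  have hνN := removePrincipalHook_apply_eq_zero (hμ.eq_zero_of_le hN N.le_succ)
  refine eq_of_forall_lt_iff fun i => ?_
  rw [lt_conjugatePart_iff hμ hN]
  rcases i with _ | i
  · simpa using hj
  · rw [Nat.add_lt_add_iff_right, lt_conjugatePart_iff hν hνN, removePrincipalHook]
    omega

end Partition

section Series

variable (t : ℝ) {μ : ℕ → ℕ} {N : ℕ}

noncomputable def partTerm (μ : ℕ → ℕ) (i : ℕ) : ℝ := Real.exp (t * ((μ i : ℝ) - (i : ℝ) - 1 / 2))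

noncomputable def hookTerm (μ : ℕ → ℕ) (j : ℕ) : ℝ :=
  partTerm t μ j - Real.exp (-t * ((conjugatePart μ j : ℝ) - (j : ℝ) - 1 / 2))

lemma partTerm_of_eq_zero {i : ℕ} (hi : μ i = 0) : partTerm t μ i = partTerm t 0 i := by
  simp [partTerm, hi]

lemma partTerm_removePrincipalHook {i : ℕ} (hi : 0 < μ (i + 1)) :
    partTerm t (removePrincipalHook μ) i = partTerm t μ (i + 1) := by
  unfold partTerm removePrincipalHook
  push_cast [Nat.cast_sub hi]
  ring_nf

lemma hookTerm_removePrincipalHook (hμ : Antitone μ) (hN : μ N = 0) {j : ℕ}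
    (hj : j < frobeniusRank (removePrincipalHook μ)) :
    hookTerm t (removePrincipalHook μ) j = hookTerm t μ (j + 1) := by
  have hνN := removePrincipalHook_apply_eq_zero (hμ.eq_zero_of_le hN N.le_succ)
  rw [lt_frobeniusRank_iff (antitone_removePrincipalHook hμ) hνN, removePrincipalHook] at hj
  have hμj : j + 1 < μ 0 := by have := hμ (Nat.zero_le (j + 1)); omega
  unfold hookTerm
  rw [partTerm_removePrincipalHook t (by omega), conjugatePart_succ hμ hN hμj]
  push_cast
  ring_nf

lemma sum_range_hookTerm_removePrincipalHook (hμ : Antitone μ) (hN : μ N = 0) (h0 : 0 < μ 0) :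
    ∑ j ∈ Finset.range (frobeniusRank μ), hookTerm t μ j =
      hookTerm t μ 0 + ∑ j ∈ Finset.range (frobeniusRank (removePrincipalHook μ)),
        hookTerm t (removePrincipalHook μ) j := by
  rw [frobeniusRank_removePrincipalHook hμ hN h0, Finset.sum_range_succ', add_comm]
  congr 1
  exact Finset.sum_congr rfl fun j hj =>
    (hookTerm_removePrincipalHook t hμ hN (Finset.mem_range.mp hj)).symm

lemma sum_range_partTerm_sub_of_le (hμ : Antitone μ) (hN : μ N = 0) {M : ℕ} (hNM : N ≤ M) :
    ∑ i ∈ Finset.range M, (partTerm t μ i - partTerm t 0 i) =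
      ∑ i ∈ Finset.range N, (partTerm t μ i - partTerm t 0 i) := by
  refine (Finset.sum_subset (Finset.range_subset_range.mpr hNM) fun i _ hi => ?_).symm
  have hle : N ≤ i := by simpa using hi
  rw [partTerm_of_eq_zero t (hμ.eq_zero_of_le hN hle), sub_self]

lemma sum_range_partTerm_sub_removePrincipalHook (hμ : Antitone μ) (hN : μ (N + 1) = 0)
    (h0 : 0 < μ 0) :
    ∑ i ∈ Finset.range (N + 1), (partTerm t μ i - partTerm t 0 i) =
      hookTerm t μ 0 + ∑ i ∈ Finset.range N,
        (partTerm t (removePrincipalHook μ) i - partTerm t 0 i) := by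
  set ν := removePrincipalHook μ
  obtain ⟨k, hk⟩ : ∃ k, conjugatePart μ 0 = k + 1 :=
    Nat.exists_eq_add_one.mpr ((lt_conjugatePart_iff hμ hN 0 0).mpr h0)
  have hpos : ∀ i, 0 < μ i ↔ i < k + 1 := fun i => hk ▸ (lt_conjugatePart_iff hμ hN 0 i).symm
  have hkN : k ≤ N := by have := hpos (N + 1); omega
  have hμk : μ (k + 1) = 0 := by have := hpos (k + 1); omega
  -- `μ` has `k + 1` nonzero rows: below them both sums vanish, above them `ν` is `μ` moved up a row
  have hshift : ∀ i ∈ Finset.range k, partTerm t μ (i + 1) - partTerm t 0 (i + 1) =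
      (partTerm t ν i - partTerm t 0 i) + (partTerm t 0 i - partTerm t 0 (i + 1)) := by
    intro i hi
    rw [partTerm_removePrincipalHook t ((hpos _).mpr (by simpa using hi))]
    ring
  have hcorner : partTerm t μ 0 - partTerm t 0 0 + (partTerm t 0 0 - partTerm t 0 k) =
      hookTerm t μ 0 := by
    simp only [hookTerm, partTerm, hk, Pi.zero_apply]
    push_cast
    ring_nf
  rw [sum_range_partTerm_sub_of_le t hμ hμk (by omega : k + 1 ≤ N + 1),
    sum_range_partTerm_sub_of_le t (antitone_removePrincipalHook hμ)
      (removePrincipalHook_apply_eq_zero hμk) hkN,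
    Finset.sum_range_succ', add_comm, Finset.sum_congr rfl hshift, Finset.sum_add_distrib,
    Finset.sum_range_sub', ← hcorner]
  ring

lemma sum_range_partTerm_sub_eq_sum_hookTerm (hμ : Antitone μ) (hN : μ N = 0) :
    ∑ i ∈ Finset.range N, (partTerm t μ i - partTerm t 0 i) =
      ∑ j ∈ Finset.range (frobeniusRank μ), hookTerm t μ j := by
  induction N generalizing μ with
  | zero => simp [frobeniusRank_eq_zero hμ hN]
  | succ N ih =>
    rcases (μ 0).eq_zero_or_pos with h0 | h0
    · rw [sum_range_partTerm_sub_of_le t hμ h0 (Nat.zero_le _), frobeniusRank_eq_zero hμ h0]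
      simp
    · rw [sum_range_partTerm_sub_removePrincipalHook t hμ hN h0,
        sum_range_hookTerm_removePrincipalHook t hμ hN h0,
        ih (antitone_removePrincipalHook hμ) (removePrincipalHook_apply_eq_zero hN)]

variable {t}

lemma hasSum_partTerm_zero (ht : 0 < t) : HasSum (partTerm t 0) (1 / (2 * Real.sinh (t / 2))) := by
  set x := Real.exp (t / 2)
  have hx : 1 < x := Real.one_lt_exp_iff.mpr (by positivity)
  have hterm : partTerm t 0 = fun i => x⁻¹ * (x⁻¹ ^ 2) ^ i := by
    ext i
    simp only [partTerm, Pi.zero_apply, x, ← Real.exp_neg, ← Real.exp_nat_mul, ← Real.exp_add]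
    push_cast
    ring_nf
  have hsum : x⁻¹ * (1 - x⁻¹ ^ 2)⁻¹ = 1 / (2 * Real.sinh (t / 2)) := by
    have hsinh : 2 * Real.sinh (t / 2) = x - x⁻¹ := by
      rw [Real.sinh_eq, Real.exp_neg]
      ring
    have : x ^ 2 - 1 ≠ 0 := by nlinarith
    rw [hsinh]
    field_simp
  rw [hterm, ← hsum]
  exact (hasSum_geometric_of_lt_one (by positivity)
    (pow_lt_one₀ (by positivity) (inv_lt_one_of_one_lt₀ hx) two_ne_zero)).mul_left x⁻¹

lemma hasSum_partTerm (ht : 0 < t) (hN : ∀ i, N ≤ i → μ i = 0) :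
    HasSum (partTerm t μ) (∑ i ∈ Finset.range N, (partTerm t μ i - partTerm t 0 i) +
      1 / (2 * Real.sinh (t / 2))) := by
  have hfinite : HasSum (fun i => partTerm t μ i - partTerm t 0 i)
      (∑ i ∈ Finset.range N, (partTerm t μ i - partTerm t 0 i)) :=
    hasSum_sum_of_ne_finset_zero fun i hi => by
      rw [partTerm_of_eq_zero t (hN i (by simpa using hi)), sub_self]
  simpa using hfinite.add (hasSum_partTerm_zero ht)

end Series

/-- In the 0-indexed convention `λ_i - i + 1/2 = μ i - i - 1/2`, `a_j + 1/2 = μ j - j - 1/2`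
and `b_j + 1/2 = μ' j - j - 1/2`. -/
theorem stmt_7 (μ : ℕ → ℕ) (hμ : Antitone μ) (hfin : ∃ N, ∀ i, N ≤ i → μ i = 0)
    (t : ℝ) (ht : 0 < t) :
    Summable (fun i : ℕ => Real.exp (t * ((μ i : ℝ) - (i : ℝ) - 1 / 2))) ∧
      ∑' i : ℕ, Real.exp (t * ((μ i : ℝ) - (i : ℝ) - 1 / 2)) =
        (∑ j ∈ Finset.range (frobeniusRank μ),
          (Real.exp (t * ((μ j : ℝ) - (j : ℝ) - 1 / 2)) -
            Real.exp (-t * ((conjugatePart μ j : ℝ) - (j : ℝ) - 1 / 2)))) +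
        1 / (2 * Real.sinh (t / 2)) := by
  obtain ⟨N, hN⟩ := hfin
  have h := hasSum_partTerm ht hN
  rw [sum_range_partTerm_sub_eq_sum_hookTerm t hμ (hN N le_rfl)] at h
  exact ⟨h.summable, h.tsum_eq⟩
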